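/- Let A be a complex m×n matrix and B a complex r×s matrix with |A|_∞ ≤ 1 and |B|_∞ ≤ 1. Then for every i = 1, ..., min(m,n,r,s): |σᵢ(A)/√(mn) − σᵢ(B)/√(rs)| ≤ 6·δ_⊟(A,B)^{1/2}. -/

import Mathlib

open Matrix Finset

/-- The cut-norm of a complex `M × N` matrix. -/
noncomputable def cutNorm {M N : ℕ} (A : Matrix (Fin M) (Fin N) ℂ) : ℝ :=
  Finset.univ.sup' Finset.univ_nonempty
    (fun p : Finset (Fin M) × Finset (Fin N) =>
      ‖∑ i ∈ p.1, ∑ j ∈ p.2, A i j‖ / (M * N))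

/-- `|A|_∞ = max_{i,j} |a_{ij}|`. -/
noncomputable def supAbs {M N : ℕ} (A : Matrix (Fin M) (Fin N) ℂ) : ℝ :=
  ⨆ i, ⨆ j, ‖A i j‖

/-- `f` rearranged in decreasing order. -/
noncomputable def sortDesc {N : ℕ} (f : Fin N → ℝ) : Fin N → ℝ :=
  fun i => f (Tuple.sort f i.rev)

/-- The singular values `σ₁(A) ≥ σ₂(A) ≥ ⋯` of `A` (0-indexed). -/
noncomputable def singVal {M N : ℕ} (A : Matrix (Fin M) (Fin N) ℂ) (i : ℕ) : ℝ :=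
  if h : i < N then
    Real.sqrt (sortDesc (Matrix.isHermitian_conjTranspose_mul_self A).eigenvalues ⟨i, h⟩)
  else 0

/-- `δ̂_⊟(X,Y) = min over permutation matrices `P`, `Q` of `‖X − P Y Q‖_□`:
multiplying by permutation matrices on both sides is relabelling rows and
columns by permutations. -/
noncomputable def hatDeltaR {M N : ℕ} (X Y : Matrix (Fin M) (Fin N) ℂ) : ℝ :=
  ⨅ p : Equiv.Perm (Fin M) × Equiv.Perm (Fin N), cutNorm (X - Y.submatrix p.1 p.2)

/-- `A^{(p,q)} = A ⊗ J_{p,q}`, realised as a matrix indexed by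
`Fin (m * p) × Fin (n * q)`. -/
def blowupR {m n : ℕ} (A : Matrix (Fin m) (Fin n) ℂ) (p q : ℕ) :
    Matrix (Fin (m * p)) (Fin (n * q)) ℂ :=
  Matrix.of fun i j => A (finProdFinEquiv.symm i).1 (finProdFinEquiv.symm j).1

/-- The cut-distance of arbitrary matrices `A` (size `m × n`) and `B`
(size `r × s`): `δ_⊟(A,B) = inf_{k ≥ 1} δ̂_⊟(A^{(kr,ks)}, B^{(km,kn)})`. -/
noncomputable def cutDistR {m n r s : ℕ} (A : Matrix (Fin m) (Fin n) ℂ)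
    (B : Matrix (Fin r) (Fin s) ℂ) : ℝ :=
  ⨅ k : ℕ, hatDeltaR (blowupR A ((k + 1) * r) ((k + 1) * s))
    ((blowupR B ((k + 1) * m) ((k + 1) * n)).submatrix
      (finCongr (by ring)) (finCongr (by ring)))


/-!
Weyl's inequality `|σᵢ(X) - σᵢ(Y)| ≤ σ₁(X - Y)`, the invariance of singular values under
permutations of rows and columns, and the scaling `σᵢ(A ⊗ J_{p,q}) = √(pq) σᵢ(A)` all come from the
Courant–Fischer min-max characterization of `σᵢ`. If the entries of `Z` are bounded by `c` and
all its sums over combinatorial rectangles by `D`, Gershgorin's theorem bounds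
`σ₁(Z)² = λ_max(Zᴴ Z)` by a row sum of `|Zᴴ Z|`, which is at most `16 c D`: a complex vector all of
whose partial sums are bounded by `D` has `ℓ¹`-norm at most `4 D`, and this is used once for the
rows of `Z` and once for the row of `Zᴴ Z`. With `c = 2` and `D = MN ‖X - Y‖_□` this gives
`σ₁(X - Y) ≤ √32 · √(MN ‖X - Y‖_□)`. After the common blow-up and any relabelling, both normalized
singular values are those of two matrices of the same size `M × N`, so the bound holds for every
term of the infimum defining `δ_⊟`.
-/

open scoped InnerProductSpace
open Module Submodule Function

section CourantFischer

variable {N : ℕ} {H : Matrix (Fin N) (Fin N) ℂ}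

lemma Orthonormal.norm_sum_smul_sq {E : Type*} [NormedAddCommGroup E] [InnerProductSpace ℂ E]
    {ι : Type*} [Fintype ι] {v : ι → E} (hv : Orthonormal ℂ v) (c : ι → ℂ) :
    ‖∑ t, c t • v t‖ ^ 2 = ∑ t, ‖c t‖ ^ 2 := by
  have h := hv.inner_sum c c Finset.univ
  rw [inner_self_eq_norm_sq_to_K] at h
  apply_fun RCLike.re at h
  simpa [map_sum, Complex.conj_mul', ← Complex.ofReal_pow] using h

lemma Orthonormal.re_inner_sum_smul_of_eigen {ι : Type*} [Fintype ι]
    {v : ι → EuclideanSpace ℂ (Fin N)} (hv : Orthonormal ℂ v) {μ : ι → ℝ}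
    (hμ : ∀ t, toEuclideanLin H (v t) = (μ t : ℂ) • v t) (c : ι → ℂ) :
    RCLike.re ⟪∑ t, c t • v t, toEuclideanLin H (∑ t, c t • v t)⟫_ℂ
      = ∑ t, μ t * ‖c t‖ ^ 2 := by
  simp only [map_sum, map_smul, hμ, smul_smul]
  rw [hv.inner_sum, map_sum]
  refine Finset.sum_congr rfl fun t _ => ?_
  rw [← mul_assoc, Complex.conj_mul', ← Complex.ofReal_pow, ← Complex.ofReal_mul, mul_comm]
  rfl

noncomputable def sortDescPerm (f : Fin N → ℝ) : Equiv.Perm (Fin N) :=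
  Fin.revPerm.trans (Tuple.sort f)

lemma sortDesc_apply (f : Fin N → ℝ) (i : Fin N) : sortDesc f i = f (sortDescPerm f i) := rfl

lemma sortDesc_antitone (f : Fin N → ℝ) : Antitone (sortDesc f) :=
  fun _ _ hij => Tuple.monotone_sort f (Fin.rev_le_rev.2 hij)

noncomputable def sortedEigenvector (hH : H.IsHermitian) (j : Fin N) : EuclideanSpace ℂ (Fin N) :=
  hH.eigenvectorBasis (sortDescPerm hH.eigenvalues j)

lemma orthonormal_sortedEigenvector (hH : H.IsHermitian) : Orthonormal ℂ (sortedEigenvector hH) :=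
  hH.eigenvectorBasis.orthonormal.comp _ (sortDescPerm _).injective

lemma toEuclideanLin_sortedEigenvector (hH : H.IsHermitian) (j : Fin N) :
    toEuclideanLin H (sortedEigenvector hH j)
      = (sortDesc hH.eigenvalues j : ℂ) • sortedEigenvector hH j := by
  ext1
  simp [sortedEigenvector, sortDesc_apply, hH.mulVec_eigenvectorBasis, Complex.real_smul]

lemma exists_re_inner_eq_of_mem_span (hH : H.IsHermitian) {ι : Type*} [Fintype ι]
    {idx : ι → Fin N} (hidx : Injective idx) {x : EuclideanSpace ℂ (Fin N)}
    (hx : x ∈ span ℂ (Set.range (sortedEigenvector hH ∘ idx))) :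
    ∃ c : ι → ℂ, RCLike.re ⟪x, toEuclideanLin H x⟫_ℂ
        = ∑ t, sortDesc hH.eigenvalues (idx t) * ‖c t‖ ^ 2 ∧ ‖x‖ ^ 2 = ∑ t, ‖c t‖ ^ 2 := by
  obtain ⟨c, rfl⟩ := (mem_span_range_iff_exists_fun ℂ).1 hx
  have hv := (orthonormal_sortedEigenvector hH).comp idx hidx
  exact ⟨c, hv.re_inner_sum_smul_of_eigen (fun t => toEuclideanLin_sortedEigenvector hH _) c,
    hv.norm_sum_smul_sq c⟩

lemma re_inner_le_of_mem_span (hH : H.IsHermitian) {ι : Type*} [Fintype ι]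
    {idx : ι → Fin N} (hidx : Injective idx) {a : ℝ}
    (ha : ∀ t, sortDesc hH.eigenvalues (idx t) ≤ a) {x : EuclideanSpace ℂ (Fin N)}
    (hx : x ∈ span ℂ (Set.range (sortedEigenvector hH ∘ idx))) :
    RCLike.re ⟪x, toEuclideanLin H x⟫_ℂ ≤ a * ‖x‖ ^ 2 := by
  obtain ⟨c, hre, hnorm⟩ := exists_re_inner_eq_of_mem_span hH hidx hx
  rw [hre, hnorm, Finset.mul_sum]
  gcongr with t
  exact ha t

lemma le_re_inner_of_mem_span (hH : H.IsHermitian) {ι : Type*} [Fintype ι]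
    {idx : ι → Fin N} (hidx : Injective idx) {a : ℝ}
    (ha : ∀ t, a ≤ sortDesc hH.eigenvalues (idx t)) {x : EuclideanSpace ℂ (Fin N)}
    (hx : x ∈ span ℂ (Set.range (sortedEigenvector hH ∘ idx))) :
    a * ‖x‖ ^ 2 ≤ RCLike.re ⟪x, toEuclideanLin H x⟫_ℂ := by
  obtain ⟨c, hre, hnorm⟩ := exists_re_inner_eq_of_mem_span hH hidx hx
  rw [hre, hnorm, Finset.mul_sum]
  gcongr with t
  exact ha t

theorem exists_finrank_eq_forall_le_re_inner (hH : H.IsHermitian) {j : ℕ} (hj : j < N) :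
    ∃ V : Submodule ℂ (EuclideanSpace ℂ (Fin N)), finrank ℂ V = j + 1 ∧
      ∀ x ∈ V, sortDesc hH.eigenvalues ⟨j, hj⟩ * ‖x‖ ^ 2 ≤ RCLike.re ⟪x, toEuclideanLin H x⟫_ℂ := by
  have hidx := Fin.castLE_injective (Nat.succ_le_of_lt hj)
  refine ⟨span ℂ (Set.range (sortedEigenvector hH ∘ Fin.castLE _)), ?_,
    fun x hx => le_re_inner_of_mem_span hH hidx (fun t => ?_) hx⟩
  · rw [finrank_span_eq_card ((orthonormal_sortedEigenvector hH).linearIndependent.comp _ hidx),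
      Fintype.card_fin]
  · exact sortDesc_antitone _ (Fin.mk_le_mk.2 (Nat.lt_succ_iff.1 t.isLt))

theorem exists_mem_ne_zero_re_inner_le (hH : H.IsHermitian) {j : ℕ} (hj : j < N)
    {V : Submodule ℂ (EuclideanSpace ℂ (Fin N))} (hV : j < finrank ℂ V) :
    ∃ x ∈ V, x ≠ 0 ∧
      RCLike.re ⟪x, toEuclideanLin H x⟫_ℂ ≤ sortDesc hH.eigenvalues ⟨j, hj⟩ * ‖x‖ ^ 2 := by
  let idx : Fin (N - j) → Fin N := fun t => ⟨j + t, by omega⟩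
  have hidx : Injective idx := fun s t hst => Fin.ext (by simpa [idx] using hst)
  set W := span ℂ (Set.range (sortedEigenvector hH ∘ idx))
  have hW : finrank ℂ W = N - j := by
    rw [finrank_span_eq_card ((orthonormal_sortedEigenvector hH).linearIndependent.comp _ hidx),
      Fintype.card_fin]
  have hVW : V ⊓ W ≠ ⊥ := by
    intro hbot
    have h1 := Submodule.finrank_sup_add_finrank_inf_eq V W
    have h2 := (V ⊔ W).finrank_le
    rw [hbot, finrank_bot, hW] at h1
    rw [finrank_euclideanSpace_fin] at h2
    omega
  obtain ⟨x, ⟨hxV, hxW⟩, hx0⟩ := (Submodule.ne_bot_iff _).1 hVW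
  exact ⟨x, hxV, hx0, re_inner_le_of_mem_span hH hidx
    (fun t => sortDesc_antitone _ (Fin.mk_le_mk.2 (Nat.le_add_right _ _))) hxW⟩

theorem re_inner_le_sortDesc_zero (hH : H.IsHermitian) (hN : 0 < N) (x : EuclideanSpace ℂ (Fin N)) :
    RCLike.re ⟪x, toEuclideanLin H x⟫_ℂ ≤ sortDesc hH.eigenvalues ⟨0, hN⟩ * ‖x‖ ^ 2 := by
  have hspan : span ℂ (Set.range (sortedEigenvector hH ∘ id)) = ⊤ :=
    ((orthonormal_sortedEigenvector hH).linearIndependent).span_eq_top_of_card_eq_finrank' (by simp)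
  exact re_inner_le_of_mem_span hH injective_id
    (fun t => sortDesc_antitone _ (Fin.mk_le_mk.2 (Nat.zero_le _))) (hspan ▸ Submodule.mem_top)

end CourantFischer

section SingularValues

open scoped ComplexOrder

variable {M N M' N' : ℕ}

lemma re_inner_toEuclideanLin_conjTranspose_mul_self (Z : Matrix (Fin M) (Fin N) ℂ)
    (x : EuclideanSpace ℂ (Fin N)) :
    RCLike.re ⟪x, toEuclideanLin (Zᴴ * Z) x⟫_ℂ = ‖toEuclideanLin Z x‖ ^ 2 := by
  simp only [Matrix.toLpLin_mul_same, LinearMap.comp_apply,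
    Matrix.toEuclideanLin_conjTranspose_eq_adjoint, LinearMap.adjoint_inner_right,
    inner_self_eq_norm_sq]

lemma singVal_nonneg (Z : Matrix (Fin M) (Fin N) ℂ) (j : ℕ) : 0 ≤ singVal Z j := by
  unfold singVal; split_ifs <;> simp [Real.sqrt_nonneg]

lemma singVal_of_le (Z : Matrix (Fin M) (Fin N) ℂ) {j : ℕ} (hj : N ≤ j) : singVal Z j = 0 :=
  dif_neg hj.not_gt

lemma sq_singVal (Z : Matrix (Fin M) (Fin N) ℂ) {j : ℕ} (hj : j < N) :
    singVal Z j ^ 2 = sortDesc (isHermitian_conjTranspose_mul_self Z).eigenvalues ⟨j, hj⟩ := by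
  rw [singVal, dif_pos hj, Real.sq_sqrt]
  exact (posSemidef_conjTranspose_mul_self Z).eigenvalues_nonneg _

theorem exists_finrank_eq_forall_singVal_mul_le (Z : Matrix (Fin M) (Fin N) ℂ) {j : ℕ}
    (hj : j < N) :
    ∃ V : Submodule ℂ (EuclideanSpace ℂ (Fin N)), finrank ℂ V = j + 1 ∧
      ∀ x ∈ V, singVal Z j * ‖x‖ ≤ ‖toEuclideanLin Z x‖ := by
  obtain ⟨V, hV, hle⟩ :=
    exists_finrank_eq_forall_le_re_inner (isHermitian_conjTranspose_mul_self Z) hj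
  refine ⟨V, hV, fun x hx => ?_⟩
  have h := hle x hx
  rw [← sq_singVal Z hj, re_inner_toEuclideanLin_conjTranspose_mul_self, ← mul_pow] at h
  exact (pow_le_pow_iff_left₀ (by positivity [singVal_nonneg Z j]) (norm_nonneg _) two_ne_zero).1 h

theorem exists_mem_ne_zero_norm_le_singVal_mul (Z : Matrix (Fin M) (Fin N) ℂ) {j : ℕ}
    (hj : j < N) {V : Submodule ℂ (EuclideanSpace ℂ (Fin N))} (hV : j < finrank ℂ V) :
    ∃ x ∈ V, x ≠ 0 ∧ ‖toEuclideanLin Z x‖ ≤ singVal Z j * ‖x‖ := by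
  obtain ⟨x, hxV, hx0, hle⟩ :=
    exists_mem_ne_zero_re_inner_le (isHermitian_conjTranspose_mul_self Z) hj hV
  refine ⟨x, hxV, hx0, ?_⟩
  rw [← sq_singVal Z hj, re_inner_toEuclideanLin_conjTranspose_mul_self, ← mul_pow] at hle
  exact (pow_le_pow_iff_left₀ (norm_nonneg _) (by positivity [singVal_nonneg Z j])
    two_ne_zero).1 hle

theorem norm_toEuclideanLin_le_singVal_zero (Z : Matrix (Fin M) (Fin N) ℂ)
    (x : EuclideanSpace ℂ (Fin N)) :
    ‖toEuclideanLin Z x‖ ≤ singVal Z 0 * ‖x‖ := by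
  rcases Nat.eq_zero_or_pos N with rfl | hN
  · simp [Subsingleton.elim x 0]
  have h := re_inner_le_sortDesc_zero (isHermitian_conjTranspose_mul_self Z) hN x
  rw [← sq_singVal Z hN, re_inner_toEuclideanLin_conjTranspose_mul_self, ← mul_pow] at h
  exact (pow_le_pow_iff_left₀ (norm_nonneg _) (by positivity [singVal_nonneg Z 0]) two_ne_zero).1 h

theorem le_singVal_of_forall_mem (Z : Matrix (Fin M) (Fin N) ℂ) {j : ℕ} (hj : j < N)
    {V : Submodule ℂ (EuclideanSpace ℂ (Fin N))} (hV : j < finrank ℂ V) {K : ℝ}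
    (hK : ∀ x ∈ V, K * ‖x‖ ≤ ‖toEuclideanLin Z x‖) : K ≤ singVal Z j := by
  obtain ⟨x, hxV, hx0, hle⟩ := exists_mem_ne_zero_norm_le_singVal_mul Z hj hV
  exact le_of_mul_le_mul_right ((hK x hxV).trans hle) (norm_pos_iff.2 hx0)

theorem singVal_le_of_forall_exists (Z : Matrix (Fin M) (Fin N) ℂ) {j : ℕ} (hj : j < N) {K : ℝ}
    (hK : ∀ V : Submodule ℂ (EuclideanSpace ℂ (Fin N)), finrank ℂ V = j + 1 →
      ∃ x ∈ V, x ≠ 0 ∧ ‖toEuclideanLin Z x‖ ≤ K * ‖x‖) : singVal Z j ≤ K := by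
  obtain ⟨V, hV, hle⟩ := exists_finrank_eq_forall_singVal_mul_le Z hj
  obtain ⟨x, hxV, hx0, hK⟩ := hK V hV
  exact le_of_mul_le_mul_right ((hle x hxV).trans hK) (norm_pos_iff.2 hx0)

theorem singVal_le_add_singVal_zero_sub (X W : Matrix (Fin M) (Fin N) ℂ) (j : ℕ) :
    singVal W j ≤ singVal X j + singVal (X - W) 0 := by
  rcases lt_or_ge j N with hj | hj
  · refine singVal_le_of_forall_exists W hj fun V hV => ?_
    obtain ⟨x, hxV, hx0, hX⟩ := exists_mem_ne_zero_norm_le_singVal_mul X hj (V := V) (by omega)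
    refine ⟨x, hxV, hx0, ?_⟩
    have hW : toEuclideanLin W x = toEuclideanLin X x - toEuclideanLin (X - W) x := by simp
    calc ‖toEuclideanLin W x‖ ≤ ‖toEuclideanLin X x‖ + ‖toEuclideanLin (X - W) x‖ :=
          hW ▸ norm_sub_le _ _
      _ ≤ singVal X j * ‖x‖ + singVal (X - W) 0 * ‖x‖ :=
          add_le_add hX (norm_toEuclideanLin_le_singVal_zero _ x)
      _ = (singVal X j + singVal (X - W) 0) * ‖x‖ := by ring
  · rw [singVal_of_le W hj, singVal_of_le X hj, zero_add]
    exact singVal_nonneg _ _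

lemma sortDesc_eigenvalues_congr {G G' : Matrix (Fin N) (Fin N) ℂ} (h : G = G')
    (hG : G.IsHermitian) (hG' : G'.IsHermitian) :
    sortDesc hG.eigenvalues = sortDesc hG'.eigenvalues := by
  subst h; rfl

lemma singVal_neg (Z : Matrix (Fin M) (Fin N) ℂ) : singVal (-Z) = singVal Z := by
  have h : (-Z)ᴴ * -Z = Zᴴ * Z := by simp
  funext j
  simp only [singVal, sortDesc_eigenvalues_congr h _ (isHermitian_conjTranspose_mul_self Z)]

theorem abs_singVal_sub_le (X W : Matrix (Fin M) (Fin N) ℂ) (j : ℕ) :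
    |singVal X j - singVal W j| ≤ singVal (X - W) 0 := by
  have h₁ := singVal_le_add_singVal_zero_sub X W j
  have h₂ := singVal_le_add_singVal_zero_sub W X j
  rw [← neg_sub X W, singVal_neg] at h₂
  exact abs_sub_le_iff.2 ⟨by linarith, by linarith⟩

theorem mul_singVal_le_of_linearIsometry (Z : Matrix (Fin M) (Fin N) ℂ)
    (Z' : Matrix (Fin M') (Fin N') ℂ)
    (L : EuclideanSpace ℂ (Fin N) →ₗᵢ[ℂ] EuclideanSpace ℂ (Fin N')) {α : ℝ} (hα : 0 ≤ α)
    (hZ : ∀ x, ‖toEuclideanLin Z' (L x)‖ = α * ‖toEuclideanLin Z x‖) (j : ℕ) :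
    α * singVal Z j ≤ singVal Z' j := by
  rcases le_or_gt N j with hj | hj
  · rw [singVal_of_le Z hj, mul_zero]
    exact singVal_nonneg _ _
  have hN : N ≤ N' := by
    simpa using L.toLinearMap.finrank_le_finrank_of_injective L.injective
  obtain ⟨V, hV, hle⟩ := exists_finrank_eq_forall_singVal_mul_le Z hj
  have hLV : finrank ℂ (V.map L.toLinearMap) = j + 1 :=
    (V.equivMapOfInjective _ L.injective).finrank_eq.symm.trans hV
  refine le_singVal_of_forall_mem Z' (by omega) (V := V.map L.toLinearMap) (by omega) ?_
  rintro _ ⟨x, hx, rfl⟩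
  calc α * singVal Z j * ‖L x‖ = α * (singVal Z j * ‖x‖) := by simp [mul_assoc]
    _ ≤ α * ‖toEuclideanLin Z x‖ := by gcongr; exact hle x hx
    _ = ‖toEuclideanLin Z' (L x)‖ := (hZ x).symm

theorem singVal_le_mul_singVal_of_norm_le (Z : Matrix (Fin M) (Fin N) ℂ)
    (Z' : Matrix (Fin M') (Fin N') ℂ)
    (Φ : EuclideanSpace ℂ (Fin N') →ₗ[ℂ] EuclideanSpace ℂ (Fin N)) {α β : ℝ} (hα : 0 ≤ α)
    (hβ : 0 ≤ β) (hΦ : ∀ x, ‖Φ x‖ ≤ β * ‖x‖)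
    (hZ : ∀ x, ‖toEuclideanLin Z' x‖ = α * ‖toEuclideanLin Z (Φ x)‖) {j : ℕ} (hj : j < N) :
    singVal Z' j ≤ α * β * singVal Z j := by
  have hσ := singVal_nonneg Z j
  rcases le_or_gt N' j with hj' | hj'
  · rw [singVal_of_le Z' hj']
    positivity
  refine singVal_le_of_forall_exists Z' hj' fun V hV => ?_
  -- Either `Φ` is injective on `V`, and `Φ V` is a test subspace for `Z`, or it kills some
  -- `x ≠ 0` in `V`, and then so does `Z'`.
  by_cases hker : LinearMap.ker (Φ.domRestrict V) = ⊥
  · have hΦV : finrank ℂ (V.map Φ) = j + 1 := by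
      have h := LinearMap.finrank_range_add_finrank_ker (Φ.domRestrict V)
      rwa [hker, finrank_bot, LinearMap.range_domRestrict, hV, add_zero] at h
    obtain ⟨_, ⟨x, hxV, rfl⟩, hx0, hle⟩ :=
      exists_mem_ne_zero_norm_le_singVal_mul Z hj (V := V.map Φ) (by omega)
    refine ⟨x, hxV, fun h => hx0 (by simp [h]), ?_⟩
    calc ‖toEuclideanLin Z' x‖ = α * ‖toEuclideanLin Z (Φ x)‖ := hZ x
      _ ≤ α * (singVal Z j * (β * ‖x‖)) := by gcongr; exact hle.trans (by gcongr; exact hΦ x)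
      _ = α * β * singVal Z j * ‖x‖ := by ring
  · obtain ⟨⟨x, hxV⟩, hx, hx0⟩ := (Submodule.ne_bot_iff _).1 hker
    refine ⟨x, hxV, fun h => hx0 (by simp [h]), ?_⟩
    rw [LinearMap.mem_ker, LinearMap.domRestrict_apply] at hx
    rw [hZ, hx, map_zero, norm_zero, mul_zero]
    positivity

end SingularValues

section Reindex

variable {M N M' N' : ℕ}

theorem singVal_submatrix (Y : Matrix (Fin M) (Fin N) ℂ) (e₁ : Fin M' ≃ Fin M)
    (e₂ : Fin N' ≃ Fin N) : singVal (Y.submatrix e₁ e₂) = singVal Y := by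
  let L₁ := LinearIsometryEquiv.piLpCongrLeft 2 ℂ ℂ e₁.symm
  let L₂ := LinearIsometryEquiv.piLpCongrLeft 2 ℂ ℂ e₂.symm
  have hL : ∀ x, toEuclideanLin (Y.submatrix e₁ e₂) (L₂ x) = L₁ (toEuclideanLin Y x) := by
    intro x
    ext i
    simp [L₁, L₂, LinearMap.funLeft, Equiv.piCongrLeft', Function.comp_def]
  have hL' : ∀ x, ‖toEuclideanLin (Y.submatrix e₁ e₂) (L₂ x)‖ = 1 * ‖toEuclideanLin Y x‖ := by
    simp [hL]
  have hL'' : ∀ x, ‖toEuclideanLin Y (L₂.symm x)‖ = 1 * ‖toEuclideanLin (Y.submatrix e₁ e₂) x‖ := by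
    intro x
    simpa using (hL' (L₂.symm x)).symm
  funext j
  refine le_antisymm ?_ ?_
  · simpa using mul_singVal_le_of_linearIsometry _ _ L₂.symm.toLinearIsometry zero_le_one hL'' j
  · simpa using mul_singVal_le_of_linearIsometry _ _ L₂.toLinearIsometry zero_le_one hL' j

end Reindex

section Blowup

variable {m n : ℕ}

lemma Fin.sum_univ_mul {β : Type*} [AddCommMonoid β] (f : Fin (m * n) → β) :
    ∑ i, f i = ∑ a, ∑ b, f (finProdFinEquiv (a, b)) := by
  rw [← Fintype.sum_prod_type', finProdFinEquiv.sum_comp]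

@[simp] lemma Fin.divNat_finProdFinEquiv (a : Fin m) (b : Fin n) :
    (finProdFinEquiv (a, b)).divNat = a := by
  have h := finProdFinEquiv.symm_apply_apply (a, b)
  rw [finProdFinEquiv_symm_apply] at h
  exact congrArg Prod.fst h

/-- The vector `v ⊗ 𝟙_p`. -/
noncomputable def blowupVec (p : ℕ) :
    EuclideanSpace ℂ (Fin m) →ₗ[ℂ] EuclideanSpace ℂ (Fin (m * p)) where
  toFun v := WithLp.toLp 2 fun i => v i.divNat
  map_add' _ _ := rfl
  map_smul' _ _ := rfl

/-- The adjoint of `blowupVec q`. -/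
noncomputable def blockSum (q : ℕ) :
    EuclideanSpace ℂ (Fin (n * q)) →ₗ[ℂ] EuclideanSpace ℂ (Fin n) where
  toFun x := WithLp.toLp 2 fun a => ∑ b, x (finProdFinEquiv (a, b))
  map_add' _ _ := by ext; simp [Finset.sum_add_distrib]
  map_smul' _ _ := by ext; simp [Finset.mul_sum]

@[simp] lemma blowupVec_apply (p : ℕ) (v : EuclideanSpace ℂ (Fin m)) (i : Fin (m * p)) :
    blowupVec p v i = v i.divNat := rfl

@[simp] lemma blockSum_apply (q : ℕ) (x : EuclideanSpace ℂ (Fin (n * q))) (a : Fin n) :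
    blockSum q x a = ∑ b, x (finProdFinEquiv (a, b)) := rfl

lemma norm_blowupVec (p : ℕ) (v : EuclideanSpace ℂ (Fin m)) : ‖blowupVec p v‖ = √p * ‖v‖ := by
  rw [EuclideanSpace.norm_eq, EuclideanSpace.norm_eq, ← Real.sqrt_mul (Nat.cast_nonneg _)]
  congr 1
  rw [Fin.sum_univ_mul, Finset.mul_sum]
  simp

lemma norm_blockSum_le (q : ℕ) (x : EuclideanSpace ℂ (Fin (n * q))) :
    ‖blockSum q x‖ ≤ √q * ‖x‖ := by
  rw [EuclideanSpace.norm_eq, EuclideanSpace.norm_eq, ← Real.sqrt_mul (Nat.cast_nonneg _)]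
  gcongr
  rw [Fin.sum_univ_mul, Finset.mul_sum]
  gcongr with a
  calc ‖∑ b, x (finProdFinEquiv (a, b))‖ ^ 2 ≤ (∑ b, ‖x (finProdFinEquiv (a, b))‖) ^ 2 := by
        gcongr; exact norm_sum_le _ _
    _ ≤ q * ∑ b, ‖x (finProdFinEquiv (a, b))‖ ^ 2 := by
        simpa using sq_sum_le_card_mul_sum_sq (s := Finset.univ)
          (f := fun b => ‖x (finProdFinEquiv (a, b))‖)

lemma blockSum_blowupVec (q : ℕ) (w : EuclideanSpace ℂ (Fin n)) :
    blockSum q (blowupVec q w) = (q : ℂ) • w := by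
  ext a
  simp

lemma toEuclideanLin_blowupR (A : Matrix (Fin m) (Fin n) ℂ) (p q : ℕ)
    (x : EuclideanSpace ℂ (Fin (n * q))) :
    toEuclideanLin (blowupR A p q) x = blowupVec p (toEuclideanLin A (blockSum q x)) := by
  ext i
  simp [blowupR, Matrix.toLpLin_apply, Matrix.mulVec, dotProduct, Finset.mul_sum,
    finProdFinEquiv_symm_apply, Fin.sum_univ_mul (n := q)]

noncomputable def blowupIsometry (q : ℕ) (hq : 0 < q) :
    EuclideanSpace ℂ (Fin n) →ₗᵢ[ℂ] EuclideanSpace ℂ (Fin (n * q)) where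
  toLinearMap := (((√q)⁻¹ : ℝ) : ℂ) • blowupVec q
  norm_map' w := by
    have : 0 < √(q : ℝ) := Real.sqrt_pos.2 (Nat.cast_pos.2 hq)
    simp [norm_smul, norm_blowupVec, abs_of_pos this, this.ne']

theorem singVal_blowupR (A : Matrix (Fin m) (Fin n) ℂ) (p : ℕ) {q : ℕ} (hq : 0 < q) {j : ℕ}
    (hj : j < n) : singVal (blowupR A p q) j = √p * √q * singVal A j := by
  refine le_antisymm ?_ ?_
  · refine singVal_le_mul_singVal_of_norm_le A _ (blockSum q) (by positivity) (by positivity)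
      (norm_blockSum_le q) (fun x => ?_) hj
    rw [toEuclideanLin_blowupR, norm_blowupVec]
  · refine mul_singVal_le_of_linearIsometry A _ (blowupIsometry q hq) (by positivity)
      (fun w => ?_) j
    have hc : ‖(((√q)⁻¹ : ℝ) : ℂ) * q‖ = √q := by
      rw [← Complex.ofReal_natCast, ← Complex.ofReal_mul, Complex.norm_real, inv_mul_eq_div,
        Real.div_sqrt, Real.norm_of_nonneg (Real.sqrt_nonneg _)]
    simp only [blowupIsometry, LinearIsometry.coe_mk, LinearMap.smul_apply, map_smul,
      toEuclideanLin_blowupR, norm_blowupVec, blockSum_blowupVec, smul_smul, norm_smul, hc]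
    ring

theorem singVal_blowupR_div_sqrt (A : Matrix (Fin m) (Fin n) ℂ) {p q : ℕ} (hp : 0 < p)
    (hq : 0 < q) {j : ℕ} (hj : j < n) :
    singVal (blowupR A p q) j / √(((m * p : ℕ) : ℝ) * (n * q : ℕ)) = singVal A j / √(m * n) := by
  have : 0 < √(p : ℝ) := by positivity
  have : 0 < √(q : ℝ) := by positivity
  rw [singVal_blowupR A p hq hj,
    show ((m * p : ℕ) : ℝ) * (n * q : ℕ) = (m * n) * (p * q) by push_cast; ring,
    Real.sqrt_mul (by positivity), Real.sqrt_mul (Nat.cast_nonneg p)]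
  field_simp

end Blowup

section CutNorm

variable {M N : ℕ}

lemma cutNorm_nonneg (Z : Matrix (Fin M) (Fin N) ℂ) : 0 ≤ cutNorm Z := by
  refine le_trans (by simp) (Finset.le_sup' (fun p : Finset (Fin M) × Finset (Fin N) =>
    ‖∑ i ∈ p.1, ∑ j ∈ p.2, Z i j‖ / (M * N)) (Finset.mem_univ (∅, ∅)))

lemma norm_le_supAbs (A : Matrix (Fin M) (Fin N) ℂ) (i : Fin M) (j : Fin N) :
    ‖A i j‖ ≤ supAbs A :=
  (le_ciSup (Set.finite_range _).bddAbove j).trans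
    (le_ciSup (f := fun i => ⨆ j, ‖A i j‖) (Set.finite_range _).bddAbove i)

lemma sum_abs_le_two_mul_of_abs_sum_le {ι : Type*} [Fintype ι] (f : ι → ℝ) {D : ℝ}
    (hD : ∀ S : Finset ι, |∑ i ∈ S, f i| ≤ D) : ∑ i, |f i| ≤ 2 * D := by
  classical
  have hpos : ∑ i ∈ univ.filter (0 ≤ f ·), |f i| = ∑ i ∈ univ.filter (0 ≤ f ·), f i :=
    Finset.sum_congr rfl fun i hi => abs_of_nonneg (Finset.mem_filter.1 hi).2
  have hneg : ∑ i ∈ univ.filter (¬0 ≤ f ·), |f i| = -∑ i ∈ univ.filter (¬0 ≤ f ·), f i := by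
    rw [← Finset.sum_neg_distrib]
    exact Finset.sum_congr rfl fun i hi => abs_of_neg (not_le.1 (Finset.mem_filter.1 hi).2)
  rw [← Finset.sum_filter_add_sum_filter_not univ (0 ≤ f ·), hpos, hneg]
  linarith [le_abs_self (∑ i ∈ univ.filter (0 ≤ f ·), f i), hD (univ.filter (0 ≤ f ·)),
    neg_abs_le (∑ i ∈ univ.filter (¬0 ≤ f ·), f i), hD (univ.filter (¬0 ≤ f ·))]

lemma sum_norm_le_four_mul_of_norm_sum_le {ι : Type*} [Fintype ι] (f : ι → ℂ) {D : ℝ}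
    (hD : ∀ S : Finset ι, ‖∑ i ∈ S, f i‖ ≤ D) : ∑ i, ‖f i‖ ≤ 4 * D := by
  have hre := sum_abs_le_two_mul_of_abs_sum_le (fun i => (f i).re) fun S => by
    rw [← Complex.re_sum]; exact (Complex.abs_re_le_norm _).trans (hD S)
  have him := sum_abs_le_two_mul_of_abs_sum_le (fun i => (f i).im) fun S => by
    rw [← Complex.im_sum]; exact (Complex.abs_im_le_norm _).trans (hD S)
  calc ∑ i, ‖f i‖ ≤ ∑ i, (|(f i).re| + |(f i).im|) :=
        Finset.sum_le_sum fun i _ => Complex.norm_le_abs_re_add_abs_im _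
    _ ≤ 4 * D := by rw [Finset.sum_add_distrib]; linarith

lemma sum_norm_conjTranspose_mul_self_apply_le (Z : Matrix (Fin M) (Fin N) ℂ) {c D : ℝ}
    (hc0 : 0 ≤ c) (hc : ∀ i j, ‖Z i j‖ ≤ c) (hD : ∀ S T, ‖∑ i ∈ S, ∑ j ∈ T, Z i j‖ ≤ D)
    (k : Fin N) :
    ∑ j, ‖(Zᴴ * Z) k j‖ ≤ 16 * c * D := by
  have hrow : ∀ T : Finset (Fin N), ‖∑ j ∈ T, (Zᴴ * Z) k j‖ ≤ 4 * c * D := by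
    intro T
    have hT := sum_norm_le_four_mul_of_norm_sum_le (fun i => ∑ j ∈ T, Z i j) fun S => hD S T
    calc ‖∑ j ∈ T, (Zᴴ * Z) k j‖ = ‖∑ i, star (Z i k) * ∑ j ∈ T, Z i j‖ := by
          simp only [Matrix.mul_apply, Matrix.conjTranspose_apply, Finset.mul_sum]
          rw [Finset.sum_comm]
      _ ≤ ∑ i, c * ‖∑ j ∈ T, Z i j‖ := by
          refine (norm_sum_le _ _).trans (Finset.sum_le_sum fun i _ => ?_)
          rw [norm_mul, norm_star]
          gcongr
          exact hc i k
      _ ≤ 4 * c * D := by rw [← Finset.mul_sum]; nlinarith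
  linarith [sum_norm_le_four_mul_of_norm_sum_le _ hrow]

lemma exists_sortDesc_zero_le_sum_norm {H : Matrix (Fin N) (Fin N) ℂ} (hH : H.IsHermitian)
    (hN : 0 < N) : ∃ k, sortDesc hH.eigenvalues ⟨0, hN⟩ ≤ ∑ j, ‖H k j‖ := by
  set μ := sortDesc hH.eigenvalues ⟨0, hN⟩
  set v := sortedEigenvector hH ⟨0, hN⟩
  have hv : Module.End.HasEigenvector (Matrix.toLin' H) (μ : ℂ) (WithLp.ofLp v) := by
    refine Module.End.hasEigenvector_iff.2 ⟨Module.End.mem_eigenspace_iff.2 ?_, ?_⟩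
    · simpa using congrArg WithLp.ofLp (toEuclideanLin_sortedEigenvector hH ⟨0, hN⟩)
    · simpa using (orthonormal_sortedEigenvector hH).ne_zero ⟨0, hN⟩
  obtain ⟨k, hk⟩ := eigenvalue_mem_ball (Module.End.hasEigenvalue_of_hasEigenvector hv)
  refine ⟨k, ?_⟩
  calc μ ≤ ‖(μ : ℂ)‖ := by simpa using le_abs_self μ
    _ ≤ ‖H k k‖ + ∑ j ∈ univ.erase k, ‖H k j‖ := by
        have := norm_le_norm_add_norm_sub' (μ : ℂ) (H k k)
        rw [Metric.mem_closedBall, dist_eq_norm] at hk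
        linarith
    _ = ∑ j, ‖H k j‖ := Finset.add_sum_erase _ (fun j => ‖H k j‖) (Finset.mem_univ k)

theorem sq_singVal_zero_le (Z : Matrix (Fin M) (Fin N) ℂ) {c D : ℝ} (hc0 : 0 ≤ c)
    (hc : ∀ i j, ‖Z i j‖ ≤ c) (hD : ∀ S T, ‖∑ i ∈ S, ∑ j ∈ T, Z i j‖ ≤ D) :
    singVal Z 0 ^ 2 ≤ 16 * c * D := by
  rcases Nat.eq_zero_or_pos N with rfl | hN
  · have hD0 : 0 ≤ D := (norm_nonneg _).trans (hD ∅ ∅)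
    rw [singVal_of_le Z le_rfl, zero_pow two_ne_zero]
    positivity
  obtain ⟨k, hk⟩ := exists_sortDesc_zero_le_sum_norm (isHermitian_conjTranspose_mul_self Z) hN
  rw [sq_singVal Z hN]
  exact hk.trans (sum_norm_conjTranspose_mul_self_apply_le Z hc0 hc hD k)

lemma norm_sum_le_mul_cutNorm (Z : Matrix (Fin M) (Fin N) ℂ) (S : Finset (Fin M))
    (T : Finset (Fin N)) : ‖∑ i ∈ S, ∑ j ∈ T, Z i j‖ ≤ M * N * cutNorm Z := by
  rcases Nat.eq_zero_or_pos M with rfl | hM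
  · simp [Finset.eq_empty_of_isEmpty S]
  rcases Nat.eq_zero_or_pos N with rfl | hN
  · simp [Finset.eq_empty_of_isEmpty T]
  rw [← div_le_iff₀' (by positivity)]
  exact Finset.le_sup' (fun p : Finset (Fin M) × Finset (Fin N) =>
    ‖∑ i ∈ p.1, ∑ j ∈ p.2, Z i j‖ / (M * N)) (Finset.mem_univ (S, T))

theorem singVal_zero_le_cutNorm (Z : Matrix (Fin M) (Fin N) ℂ) (hZ : ∀ i j, ‖Z i j‖ ≤ 2) :
    singVal Z 0 ≤ 6 * √(M * N * cutNorm Z) := by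
  have h := sq_singVal_zero_le Z zero_le_two hZ (norm_sum_le_mul_cutNorm Z)
  have hD : 0 ≤ (M : ℝ) * N * cutNorm Z := (norm_nonneg _).trans (norm_sum_le_mul_cutNorm Z ∅ ∅)
  rw [show (6 : ℝ) = √36 by rw [show (36 : ℝ) = 6 ^ 2 by norm_num, Real.sqrt_sq (by norm_num)],
    ← Real.sqrt_mul (by norm_num)]
  exact Real.le_sqrt_of_sq_le (by linarith)

theorem abs_singVal_sub_le_cutNorm (X Y : Matrix (Fin M) (Fin N) ℂ) (hX : ∀ i j, ‖X i j‖ ≤ 1)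
    (hY : ∀ i j, ‖Y i j‖ ≤ 1) (j : ℕ) :
    |singVal X j - singVal Y j| ≤ 6 * √(M * N * cutNorm (X - Y)) :=
  (abs_singVal_sub_le X Y j).trans <| singVal_zero_le_cutNorm _ fun i k =>
    (norm_sub_le _ _).trans (by linarith [hX i k, hY i k])

theorem abs_sub_div_sqrt_le_cutNorm (X Y : Matrix (Fin M) (Fin N) ℂ) (hM : 0 < M)
    (hN : 0 < N) (hX : ∀ i j, ‖X i j‖ ≤ 1) (hY : ∀ i j, ‖Y i j‖ ≤ 1) (j : ℕ) :
    |singVal X j / √(M * N) - singVal Y j / √(M * N)| ≤ 6 * √(cutNorm (X - Y)) := by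
  have hMN : 0 < √((M : ℝ) * N) := by positivity
  rw [← sub_div, abs_div, abs_of_pos hMN, div_le_iff₀ hMN, mul_assoc,
    ← Real.sqrt_mul (cutNorm_nonneg _), mul_comm (cutNorm _)]
  exact abs_singVal_sub_le_cutNorm X Y hX hY j

end CutNorm

lemma le_mul_sqrt_iInf {ι : Sort*} [Nonempty ι] {f : ι → ℝ} (hf : ∀ a, 0 ≤ f a) {c L : ℝ}
    (hc : 0 ≤ c) (h : ∀ a, L ≤ c * √(f a)) : L ≤ c * √(⨅ a, f a) := by
  rw [Monotone.map_ciInf_of_continuousAt (f := fun x => c * √x) (by fun_prop)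
    (fun _ _ hxy => mul_le_mul_of_nonneg_left (Real.sqrt_le_sqrt hxy) hc)
    ⟨0, Set.forall_mem_range.2 hf⟩]
  exact le_ciInf h

/-- Let `A` be `m × n` and `B` be `r × s` complex matrices with `|A|_∞ ≤ 1`
and `|B|_∞ ≤ 1`.  Then for every `i = 1, …, min(m,n,r,s)`:
`|σᵢ(A)/√(mn) − σᵢ(B)/√(rs)| ≤ 6 δ_⊟(A,B)^{1/2}`. -/
theorem singVal_cutDist_bound {m n r s : ℕ} (A : Matrix (Fin m) (Fin n) ℂ)
    (B : Matrix (Fin r) (Fin s) ℂ) (hA1 : supAbs A ≤ 1) (hB1 : supAbs B ≤ 1)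
    (i : ℕ) (hi : 1 ≤ i) (him : i ≤ m) (hin : i ≤ n) (hir : i ≤ r) (his : i ≤ s) :
    |singVal A (i - 1) / Real.sqrt (m * n) -
      singVal B (i - 1) / Real.sqrt (r * s)| ≤
      6 * Real.sqrt (cutDistR A B) := by
  obtain ⟨hm, hn, hr, hs⟩ : 0 < m ∧ 0 < n ∧ 0 < r ∧ 0 < s := by omega
  refine le_mul_sqrt_iInf (fun k => Real.iInf_nonneg fun _ => cutNorm_nonneg _) (by norm_num)
    fun k => le_mul_sqrt_iInf (fun _ => cutNorm_nonneg _) (by norm_num) fun e => ?_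
  have hB : singVal B (i - 1) / √(r * s)
      = singVal (((blowupR B ((k + 1) * m) ((k + 1) * n)).submatrix (finCongr (by ring))
          (finCongr (by ring))).submatrix e.1 e.2) (i - 1)
        / √(((m * ((k + 1) * r) : ℕ) : ℝ) * (n * ((k + 1) * s) : ℕ)) := by
    rw [singVal_submatrix, singVal_submatrix, ← singVal_blowupR_div_sqrt B (p := (k + 1) * m)
      (q := (k + 1) * n) (by positivity) (by positivity) (by omega)]
    congr 2
    push_cast
    ring
  rw [← singVal_blowupR_div_sqrt A (p := (k + 1) * r) (q := (k + 1) * s) (by positivity)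
    (by positivity) (by omega), hB]
  exact abs_sub_div_sqrt_le_cutNorm _ _ (by positivity) (by positivity)
    (fun _ _ => (norm_le_supAbs A _ _).trans hA1) (fun _ _ => (norm_le_supAbs B _ _).trans hB1) _
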